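/- Let F, G, J be integers with 0 ≤ G ≤ F and 0 ≤ J ≤ F. Then (−1)^{J−1} · C(F−J, G−1) · C(F, J−1) = ∑_{m=0}^{J−1} (−1)^m · C(F−J+m, G−J+m) · C(F−G+1, m). -/

import Mathlib

/-!
With `n = F - J` and `k = F - G`, symmetry turns the summand into `(-1)^m C(n+m, k) C(k+1, m)`,
and the partial sums of these telescope: `(-1)^(j-1) C(n, k-j+1) C(n+j, j-1)` has them as its
successive differences. That is a consequence of Pascal's rule and of
`C(x, k) C(k, j) = C(x, j) C(x-j, k-j)`, both of which hold for all integers because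
`C(x, k) = 0` for `k < 0`.
-/

/-- The generalized binomial coefficient `C(x, k)` for integers `x, k`:
`x(x-1)⋯(x-k+1)/k!` when `k ≥ 0` and `0` when `k < 0`. -/
noncomputable def zchoose (x k : ℤ) : ℤ := if 0 ≤ k then Ring.choose x k.toNat else 0

lemma zchoose_of_neg (x : ℤ) {k : ℤ} (hk : k < 0) : zchoose x k = 0 := by
  simp [zchoose, hk.not_ge]

lemma zchoose_natCast (n : ℕ) {k : ℤ} (hk : 0 ≤ k) : zchoose n k = n.choose k.toNat := by
  simp [zchoose, hk, Ring.choose_natCast]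

lemma zchoose_succ_succ (x k : ℤ) :
    zchoose (x + 1) (k + 1) = zchoose x k + zchoose x (k + 1) := by
  rcases lt_trichotomy k (-1) with hk | rfl | hk
  · simp [zchoose_of_neg _ (show k < 0 by omega), zchoose_of_neg _ (show k + 1 < 0 by omega)]
  · simp [zchoose]
  · lift k to ℕ using (by omega)
    simp only [zchoose, show (0 : ℤ) ≤ k + 1 by omega, Nat.cast_nonneg, if_true]
    exact_mod_cast Ring.choose_succ_succ x k

lemma zchoose_mul_zchoose (x k j : ℤ) :
    zchoose x k * zchoose k j = zchoose x j * zchoose (x - j) (k - j) := by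
  rcases lt_or_ge j 0 with hj | hj
  · simp [zchoose_of_neg _ hj]
  rcases lt_or_ge k j with hkj | hkj
  · rw [zchoose_of_neg _ (sub_neg.2 hkj), mul_zero]
    rcases lt_or_ge k 0 with hk | hk
    · rw [zchoose_of_neg _ hk, zero_mul]
    · lift k to ℕ using hk
      rw [zchoose_natCast _ hj, Nat.choose_eq_zero_of_lt (by omega), Nat.cast_zero, mul_zero]
  lift j to ℕ using hj
  lift k to ℕ using (by omega)
  have hjk : j ≤ k := by omega
  rw [zchoose_natCast _ (Nat.cast_nonneg j), ← Nat.cast_sub hjk]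
  simp only [zchoose, Nat.cast_nonneg, if_true, Int.toNat_natCast]
  rw [mul_comm, ← nsmul_eq_mul, Ring.choose_smul_choose x hjk]

lemma zchoose_symm {x : ℤ} (hx : 0 ≤ x) (k : ℤ) : zchoose x k = zchoose x (x - k) := by
  lift x to ℕ using hx
  rcases lt_or_ge k 0 with hk | hk
  · rw [zchoose_of_neg _ hk, zchoose_natCast _ (by omega), Nat.choose_eq_zero_of_lt (by omega),
      Nat.cast_zero]
  rcases le_or_gt k x with hkx | hkx
  · rw [zchoose_natCast _ hk, zchoose_natCast _ (by omega), ← Nat.choose_symm (by omega)]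
    congr 3; omega
  · rw [zchoose_natCast _ hk, Nat.choose_eq_zero_of_lt (by omega), zchoose_of_neg _ (by omega),
      Nat.cast_zero]

lemma zchoose_telescope_step (n k j : ℤ) :
    zchoose n (k - j) * zchoose (n + j + 1) j + zchoose n (k - j + 1) * zchoose (n + j) (j - 1)
      = zchoose (n + j) k * zchoose (k + 1) j := by
  have pascal_k := zchoose_succ_succ k (j - 1)
  have pascal_n := zchoose_succ_succ n (k - j)
  have pascal_nj := zchoose_succ_succ (n + j) (j - 1)
  have subset_j := zchoose_mul_zchoose (n + j) k j
  have subset_j' := zchoose_mul_zchoose (n + j) k (j - 1)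
  simp only [sub_add_cancel, add_sub_cancel_right, show n + j - (j - 1) = n + 1 by ring,
    show k - (j - 1) = k - j + 1 by ring] at *
  rw [pascal_k, pascal_nj]
  linear_combination -subset_j - subset_j' - zchoose (n + j) (j - 1) * pascal_n

lemma sum_range_negOnePow_mul_zchoose (n k : ℤ) (j : ℕ) :
    ∑ m ∈ Finset.range j, (m : ℤ).negOnePow * zchoose (n + m) k * zchoose (k + 1) m
      = ((j : ℤ) - 1).negOnePow * zchoose n (k - j + 1) * zchoose (n + j) (j - 1) := by
  let T : ℕ → ℤ := fun j ↦
    ((j : ℤ) - 1).negOnePow * zchoose n (k - j + 1) * zchoose (n + j) (j - 1)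
  have hT0 : T 0 = 0 := by simp [T, zchoose_of_neg n (show (-1 : ℤ) < 0 by norm_num)]
  rw [← sub_zero (_ * _), ← hT0, ← Finset.sum_range_sub T]
  refine Finset.sum_congr rfl fun m _ ↦ ?_
  simp only [T, Nat.cast_succ, add_sub_cancel_right, Int.negOnePow_sub, Int.negOnePow_one,
    Int.negOnePow_succ, mul_neg, mul_one, neg_neg, Units.val_neg, ← add_assoc]
  rw [show k - ((m : ℤ) + 1) + 1 = k - m by ring]
  linear_combination (m : ℤ).negOnePow * (zchoose_telescope_step n k m).symm

theorem binomial_identity_23_9_general (F G J : ℤ)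
    (hJ0 : 0 ≤ J) (hJF : J ≤ F) :
    ((J - 1).negOnePow : ℤ) * zchoose (F - J) (G - 1) * zchoose F (J - 1)
      = ∑ m ∈ Finset.Icc (0 : ℤ) (J - 1),
          (m.negOnePow : ℤ) * zchoose (F - J + m) (G - J + m) * zchoose (F - G + 1) m := by
  lift J to ℕ using hJ0
  have hn : 0 ≤ F - J := by omega
  rw [Int.Icc_eq_finset_map, Finset.sum_map, sub_add_cancel, sub_zero, Int.toNat_natCast]
  simp only [Function.Embedding.trans_apply, Nat.castEmbedding_apply, addLeftEmbedding_apply,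
    zero_add]
  have hsymm (m : ℕ) : zchoose (F - J + m) (G - J + m) = zchoose (F - J + m) (F - G) := by
    rw [zchoose_symm (by omega)]
    congr 1
    ring
  simp_rw [hsymm, sum_range_negOnePow_mul_zchoose, zchoose_symm hn (G - 1)]
  rw [sub_add_cancel, show F - J - (G - 1) = F - G - J + 1 by ring]

/-- For integers `F, G, J` with `0 ≤ G ≤ F` and `0 ≤ J ≤ F`,
`(−1)^{J−1} · C(F−J, G−1) · C(F, J−1)
  = ∑_{m=0}^{J−1} (−1)^m · C(F−J+m, G−J+m) · C(F−G+1, m)`. -/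
theorem binomial_identity_23_9 (F G J : ℤ) (hG0 : 0 ≤ G) (hGF : G ≤ F)
    (hJ0 : 0 ≤ J) (hJF : J ≤ F) :
    ((J - 1).negOnePow : ℤ) * zchoose (F - J) (G - 1) * zchoose F (J - 1)
      = ∑ m ∈ Finset.Icc (0 : ℤ) (J - 1),
          (m.negOnePow : ℤ) * zchoose (F - J + m) (G - J + m) * zchoose (F - G + 1) m :=
  binomial_identity_23_9_general F G J hJ0 hJF
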